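/- (Marginal increasing convex order of the truncated Euler scheme, along a fixed realization of the common-noise increments.) In the one-dimensional truncated Euler-scheme setup with assumptions (a)–(g) described in the context, if in addition Law(X₀) ⪯_icv Law(Y₀), then Law(X̃_m) ⪯_icv Law(Ỹ_m) for every m = 0, 1, …, M. -/

import Mathlib

open MeasureTheory ProbabilityTheory

noncomputable section

/-- A real function has linear growth if `|φ(x)| ≤ C (1 + |x|)` for some `C > 0`. -/
def LinGrowth1 (φ : ℝ → ℝ) : Prop := ∃ C > 0, ∀ x, |φ x| ≤ C * (1 + |x|)

/-- Increasing convex order for measures on `ℝ`: `μ ⪯_icv ν` iff `∫ φ dμ ≤ ∫ φ dν` for every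
non-decreasing convex function `φ` of linear growth. -/
def IcvOrder (μ ν : Measure ℝ) : Prop :=
  ∀ φ : ℝ → ℝ, ConvexOn ℝ Set.univ φ → Monotone φ → LinGrowth1 φ →
    ∫ x, φ x ∂μ ≤ ∫ x, φ x ∂ν

/-- `μ` is a probability measure on `ℝ` with finite `p`-th moment. -/
def MemPp1 (p : ℝ) (μ : Measure ℝ) : Prop :=
  IsProbabilityMeasure μ ∧ (∫⁻ ξ, ENNReal.ofReal (|ξ| ^ p) ∂μ) < ⊤

/-- Codomains for the independence statement: the noises `Z m` and the pair `(X₀, Y₀)`. -/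
def mixTypeR (M : ℕ) : Fin M ⊕ Unit → Type
  | Sum.inl _ => ℝ
  | Sum.inr _ => ℝ × ℝ

def mixMSR (M : ℕ) : ∀ i, MeasurableSpace (mixTypeR M i)
  | Sum.inl _ => (inferInstance : MeasurableSpace ℝ)
  | Sum.inr _ => (inferInstance : MeasurableSpace (ℝ × ℝ))

/-- The family consisting of the noises `Z m` together with the pair `(X₀, Y₀)`. -/
def mixFunR {Ω : Type*} {M : ℕ} (X₀ Y₀ : Ω → ℝ) (Z : Fin M → Ω → ℝ) :
    ∀ i, Ω → mixTypeR M i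
  | Sum.inl m => Z m
  | Sum.inr _ => fun ω => (X₀ ω, Y₀ ω)

/-!
Conditionally on the past, one step of either scheme moves a state `x` to `a x + s x W`, where
`W` is the truncated Gaussian increment, bounded and symmetric, and independent of the state.
For a non-decreasing convex `φ` of linear growth, `Φ x = E φ(a x + s x W)` is then again
non-decreasing (the truncation keeps `x ↦ a x + s x w` monotone), convex (because `a`, `s` are
convex, `s ≥ 0`, and by symmetry of `W` the map `(a, s) ↦ E φ(a + s W)` is non-decreasing in `a`
and in `s ≥ 0`) and of linear growth. Hence `E φ(X̃_{m+1}) = E Φ(X̃_m) ≤ E Φ(Ỹ_m)`. The second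
scheme has larger coefficients `β ≥ b`, `θ ≥ σ` (via (d) and (f)) and the same common-noise
term (via (e)), so by the same monotonicity in `(a, s)` its `Ψ` dominates `Φ`, and
`E Ψ(Ỹ_m) = E φ(Ỹ_{m+1})`.
-/

open Set

section ConvexIntegrals

lemma ConvexOn.comp_add_mul_add_comp_sub_mul_le {φ : ℝ → ℝ} (hφ : ConvexOn ℝ univ φ) (a w : ℝ)
    {s s' : ℝ} (hs : 0 ≤ s) (hss' : s ≤ s') :
    φ (a + s * w) + φ (a - s * w) ≤ φ (a + s' * w) + φ (a - s' * w) := by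
  rcases (hs.trans hss').eq_or_lt with hs' | hs'
  · obtain rfl : s = 0 := le_antisymm (hss'.trans hs'.ge) hs
    rw [← hs']
  set l := (s' + s) / (2 * s') with hl
  have hl0 : 0 ≤ l := by positivity
  have hl1 : 0 ≤ 1 - l := by
    rw [hl, sub_nonneg, div_le_one₀ (by positivity)]
    linarith
  have h₁ := hφ.2 (mem_univ (a + s' * w)) (mem_univ (a - s' * w)) hl0 hl1 (add_sub_cancel l 1)
  have h₂ := hφ.2 (mem_univ (a - s' * w)) (mem_univ (a + s' * w)) hl0 hl1 (add_sub_cancel l 1)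
  have e₁ : l • (a + s' * w) + (1 - l) • (a - s' * w) = a + s * w := by
    simp only [hl, smul_eq_mul]; field_simp; ring
  have e₂ : l • (a - s' * w) + (1 - l) • (a + s' * w) = a - s * w := by
    simp only [hl, smul_eq_mul]; field_simp; ring
  rw [e₁] at h₁
  rw [e₂] at h₂
  simp only [smul_eq_mul] at h₁ h₂
  linarith

variable {Ω : Type*} [MeasurableSpace Ω] {P : Measure Ω}

lemma Monotone.integrable_comp_of_abs_le [IsFiniteMeasure P] {φ : ℝ → ℝ} (hφ : Monotone φ)
    {g : Ω → ℝ} (hg : Measurable g) {C : ℝ} (hgC : ∀ ω, |g ω| ≤ C) :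
    Integrable (fun ω => φ (g ω)) P :=
  .of_bound (hφ.measurable.comp hg).aestronglyMeasurable (max |φ (-C)| |φ C|) <| ae_of_all _
    fun ω => abs_le_max_abs_abs (hφ (neg_le_of_abs_le (hgC ω))) (hφ (le_of_abs_le (hgC ω)))

lemma integral_comp_neg_eq_of_map_neg_eq {W : Ω → ℝ} (hW : Measurable W)
    (hsymm : P.map (fun ω => -W ω) = P.map W) {f : ℝ → ℝ} (hf : Measurable f) :
    ∫ ω, f (-W ω) ∂P = ∫ ω, f (W ω) ∂P := by
  rw [← integral_map (φ := fun ω => -W ω) hW.neg.aemeasurable hf.aestronglyMeasurable, hsymm,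
    integral_map hW.aemeasurable hf.aestronglyMeasurable]

variable [IsFiniteMeasure P] {φ : ℝ → ℝ} {W : Ω → ℝ} {cW : ℝ}

lemma integrable_comp_add_mul (hφ : Monotone φ) (hW : Measurable W) (hWb : ∀ ω, |W ω| ≤ cW)
    (a s : ℝ) : Integrable (fun ω => φ (a + s * W ω)) P :=
  hφ.integrable_comp_of_abs_le (by fun_prop) (C := |a| + |s| * cW) fun ω =>
    (abs_add_le _ _).trans (by rw [abs_mul]; gcongr; exact hWb ω)

lemma integral_comp_add_mul_mono (hφc : ConvexOn ℝ univ φ) (hφm : Monotone φ) (hW : Measurable W)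
    (hWb : ∀ ω, |W ω| ≤ cW) (hsymm : P.map (fun ω => -W ω) = P.map W) {a a' s s' : ℝ}
    (haa' : a ≤ a') (hs : 0 ≤ s) (hss' : s ≤ s') :
    ∫ ω, φ (a + s * W ω) ∂P ≤ ∫ ω, φ (a' + s' * W ω) ∂P := by
  have hint := integrable_comp_add_mul (P := P) hφm hW hWb
  have hint' : ∀ t, Integrable (fun ω => φ (a' - t * W ω)) P := fun t => by
    simpa only [neg_mul, ← sub_eq_add_neg] using hint a' (-t)
  have hsum : ∀ t, ∫ ω, (φ (a' + t * W ω) + φ (a' - t * W ω)) ∂P =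
      2 * ∫ ω, φ (a' + t * W ω) ∂P := fun t => by
    have hreflect := integral_comp_neg_eq_of_map_neg_eq hW hsymm
      (f := fun z => φ (a' + t * z)) (hφm.measurable.comp (by fun_prop))
    simp only [mul_neg, ← sub_eq_add_neg] at hreflect
    rw [integral_add (hint a' t) (hint' t), hreflect]
    ring
  have hshift : ∫ ω, φ (a + s * W ω) ∂P ≤ ∫ ω, φ (a' + s * W ω) ∂P :=
    integral_mono (hint a s) (hint a' s) fun ω => hφm (by linarith)
  have hspread : ∫ ω, (φ (a' + s * W ω) + φ (a' - s * W ω)) ∂P ≤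
      ∫ ω, (φ (a' + s' * W ω) + φ (a' - s' * W ω)) ∂P :=
    integral_mono ((hint a' s).add (hint' s)) ((hint a' s').add (hint' s'))
      fun ω => hφc.comp_add_mul_add_comp_sub_mul_le a' (W ω) hs hss'
  rw [hsum, hsum] at hspread
  linarith

end ConvexIntegrals

section LinearGrowth

variable {Ω : Type*} [MeasurableSpace Ω] {P : Measure Ω}

lemma LinGrowth1.of_abs_le {f : ℝ → ℝ} {L R : ℝ} (hL : 0 ≤ L) (hR : 0 ≤ R)
    (hf : ∀ x, |f x| ≤ L * (1 + |x| + R)) : LinGrowth1 f :=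
  ⟨L * (1 + R) + 1, by positivity, fun x => (hf x).trans <| by
    nlinarith [abs_nonneg x, mul_nonneg (mul_nonneg hL hR) (abs_nonneg x)]⟩

lemma MemLp.of_abs_le_mul_one_add_abs [IsFiniteMeasure P] {q : ENNReal} {X Y : Ω → ℝ}
    (hX : MemLp X q P) (hY : AEStronglyMeasurable Y P) {K : ℝ}
    (hYX : ∀ ω, |Y ω| ≤ K * (1 + |X ω|)) : MemLp Y q P :=
  .of_le (((memLp_const (1 : ℝ)).add hX.abs).const_mul K) hY <|
    ae_of_all _ fun ω => (hYX ω).trans (le_abs_self _)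

lemma LinGrowth1.integrable_comp [IsFiniteMeasure P] {f : ℝ → ℝ} (hf : LinGrowth1 f)
    (hfm : Measurable f) {Y : Ω → ℝ} (hY : Integrable Y P) : Integrable (fun ω => f (Y ω)) P := by
  obtain ⟨C, -, hC⟩ := hf
  exact (MemLp.of_abs_le_mul_one_add_abs (memLp_one_iff_integrable.2 hY)
    (hfm.comp_aemeasurable hY.aemeasurable).aestronglyMeasurable fun ω => hC (Y ω)).integrable
      le_rfl

lemma LinGrowth1.integrable_map [IsFiniteMeasure P] {f : ℝ → ℝ} (hf : LinGrowth1 f)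
    (hfm : Measurable f) {Y : Ω → ℝ} (hYm : Measurable Y) (hY : Integrable Y P) :
    Integrable f (P.map Y) :=
  (integrable_map_measure hfm.aestronglyMeasurable hYm.aemeasurable).2 (hf.integrable_comp hfm hY)

end LinearGrowth

section Transition

variable {Ω : Type*} [MeasurableSpace Ω] {P : Measure Ω} {φ : ℝ → ℝ} {W : Ω → ℝ} {cW : ℝ}
  {a s : ℝ → ℝ}

lemma convexOn_integral_comp_add_mul [IsFiniteMeasure P] (hφc : ConvexOn ℝ univ φ)
    (hφm : Monotone φ) (hW : Measurable W) (hWb : ∀ ω, |W ω| ≤ cW)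
    (hsymm : P.map (fun ω => -W ω) = P.map W) (ha : ConvexOn ℝ univ a) (hs : ConvexOn ℝ univ s)
    (hs0 : ∀ x, 0 ≤ s x) : ConvexOn ℝ univ fun x => ∫ ω, φ (a x + s x * W ω) ∂P := by
  refine ⟨convex_univ, fun x _ y _ lx ly hlx hly hl => ?_⟩
  have hint := integrable_comp_add_mul (P := P) hφm hW hWb
  calc ∫ ω, φ (a (lx • x + ly • y) + s (lx • x + ly • y) * W ω) ∂P
      ≤ ∫ ω, φ ((lx * a x + ly * a y) + (lx * s x + ly * s y) * W ω) ∂P :=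
        integral_comp_add_mul_mono hφc hφm hW hWb hsymm (ha.2 trivial trivial hlx hly hl)
          (hs0 _) (hs.2 trivial trivial hlx hly hl)
    _ ≤ ∫ ω, (lx * φ (a x + s x * W ω) + ly * φ (a y + s y * W ω)) ∂P :=
        integral_mono (hint _ _) (((hint _ _).const_mul lx).add ((hint _ _).const_mul ly))
          fun ω => by
            have hφω := hφc.2 (mem_univ (a x + s x * W ω)) (mem_univ (a y + s y * W ω)) hlx hly hl
            simp only [smul_eq_mul] at hφω
            convert hφω using 2
            ring
    _ = lx • ∫ ω, φ (a x + s x * W ω) ∂P + ly • ∫ ω, φ (a y + s y * W ω) ∂P := by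
        rw [integral_add ((hint _ _).const_mul lx) ((hint _ _).const_mul ly), integral_const_mul,
          integral_const_mul, smul_eq_mul, smul_eq_mul]

lemma monotone_integral_comp_add_mul [IsFiniteMeasure P] (hφm : Monotone φ) (hW : Measurable W)
    (hWb : ∀ ω, |W ω| ≤ cW) (hmono : ∀ w, |w| ≤ cW → Monotone fun x => a x + s x * w) :
    Monotone fun x => ∫ ω, φ (a x + s x * W ω) ∂P := fun _ _ hxy =>
  integral_mono (integrable_comp_add_mul hφm hW hWb _ _) (integrable_comp_add_mul hφm hW hWb _ _)
    fun ω => hφm (hmono (W ω) (hWb ω) hxy)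

lemma linGrowth1_integral_comp_add_mul [IsProbabilityMeasure P] (hφg : LinGrowth1 φ)
    (hWb : ∀ ω, |W ω| ≤ cW) {K : ℝ} (hK : ∀ x w, |w| ≤ cW → |a x + s x * w| ≤ K * (1 + |x|)) :
    LinGrowth1 fun x => ∫ ω, φ (a x + s x * W ω) ∂P := by
  obtain ⟨C, hC0, hC⟩ := hφg
  refine ⟨C * (1 + |K|), by positivity, fun x => ?_⟩
  have hbound : ∀ ω, ‖φ (a x + s x * W ω)‖ ≤ C * (1 + |K|) * (1 + |x|) := fun ω => by
    rw [mul_assoc]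
    refine (hC _).trans (mul_le_mul_of_nonneg_left ?_ hC0.le)
    nlinarith [hK x (W ω) (hWb ω), le_abs_self K, abs_nonneg x,
      mul_nonneg (sub_nonneg.2 (le_abs_self K)) (abs_nonneg x)]
  simpa using norm_integral_le_of_norm_le_const (μ := P) (ae_of_all _ hbound)

lemma stronglyMeasurable_integral_comp_add_mul [SFinite P] (hφ : Measurable φ) (hW : Measurable W)
    (ha : Measurable a) (hs : Measurable s) :
    StronglyMeasurable fun x => ∫ ω, φ (a x + s x * W ω) ∂P :=
  (hφ.comp (by fun_prop) : Measurable fun q : ℝ × Ω => φ (a q.1 + s q.1 * W q.2)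
    ).stronglyMeasurable.integral_prod_right'

end Transition

section Comparison

variable {Ω : Type*} [MeasurableSpace Ω] {P : Measure Ω}

lemma ProbabilityTheory.IndepFun.integral_comp_eq_integral_integral [IsFiniteMeasure P]
    {α β : Type*} [MeasurableSpace α] [MeasurableSpace β] {X : Ω → α} {W : Ω → β}
    (hXW : IndepFun X W P)
    (hX : Measurable X) (hW : Measurable W) {F : α → β → ℝ} (hF : Measurable (Function.uncurry F))
    (hFi : Integrable (fun ω => F (X ω) (W ω)) P) :
    ∫ ω, F (X ω) (W ω) ∂P = ∫ x, ∫ ω, F x (W ω) ∂P ∂(P.map X) := by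
  have hXW' : Measurable fun ω => (X ω, W ω) := hX.prodMk hW
  have hprod : P.map (fun ω => (X ω, W ω)) = (P.map X).prod (P.map W) :=
    (indepFun_iff_map_prod_eq_prod_map_map hX.aemeasurable hW.aemeasurable).1 hXW
  have hFi' : Integrable (Function.uncurry F) ((P.map X).prod (P.map W)) :=
    hprod ▸ (integrable_map_measure hF.aestronglyMeasurable hXW'.aemeasurable).2 hFi
  calc ∫ ω, F (X ω) (W ω) ∂P = ∫ q, Function.uncurry F q ∂(P.map fun ω => (X ω, W ω)) :=
        (integral_map hXW'.aemeasurable hF.aestronglyMeasurable).symm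
    _ = ∫ x, ∫ w, F x w ∂(P.map W) ∂(P.map X) := by rw [hprod, integral_prod _ hFi']; rfl
    _ = ∫ x, ∫ ω, F x (W ω) ∂P ∂(P.map X) := integral_congr_ae <| ae_of_all _ fun x =>
        integral_map hW.aemeasurable (hF.comp measurable_prodMk_left).aestronglyMeasurable

variable [IsProbabilityMeasure P] {φ : ℝ → ℝ} {X W : Ω → ℝ} {cW : ℝ} {a s : ℝ → ℝ}

lemma integral_map_add_mul_of_indepFun (hφ : Measurable φ) (hφg : LinGrowth1 φ)
    (hX : Measurable X) (hXi : Integrable X P) (hW : Measurable W) (hXW : IndepFun X W P)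
    (hWb : ∀ ω, |W ω| ≤ cW) (ha : Measurable a) (hs : Measurable s) {K : ℝ}
    (hK : ∀ x w, |w| ≤ cW → |a x + s x * w| ≤ K * (1 + |x|)) :
    ∫ z, φ z ∂(P.map fun ω => a (X ω) + s (X ω) * W ω) =
      ∫ x, ∫ ω, φ (a x + s x * W ω) ∂P ∂(P.map X) := by
  have hstep : Measurable fun ω => a (X ω) + s (X ω) * W ω := by fun_prop
  have hstepi : Integrable (fun ω => a (X ω) + s (X ω) * W ω) P :=
    (MemLp.of_abs_le_mul_one_add_abs (memLp_one_iff_integrable.2 hXi) hstep.aestronglyMeasurable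
      fun ω => hK (X ω) (W ω) (hWb ω)).integrable le_rfl
  rw [integral_map hstep.aemeasurable hφ.aestronglyMeasurable]
  exact hXW.integral_comp_eq_integral_integral hX hW (F := fun x w => φ (a x + s x * w))
    (hφ.comp (by fun_prop)) (hφg.integrable_comp hφ hstepi)

theorem IcvOrder.map_add_mul {Y : Ω → ℝ} (hXY : IcvOrder (P.map X) (P.map Y))
    (hX : Measurable X) (hY : Measurable Y) (hXi : Integrable X P) (hYi : Integrable Y P)
    (hW : Measurable W) (hXW : IndepFun X W P) (hYW : IndepFun Y W P) (hWb : ∀ ω, |W ω| ≤ cW)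
    (hsymm : P.map (fun ω => -W ω) = P.map W) {a' s' : ℝ → ℝ} (ha : Measurable a)
    (hs : Measurable s) (ha' : Measurable a') (hs' : Measurable s')
    (ha_conv : ConvexOn ℝ univ a) (hs_conv : ConvexOn ℝ univ s) (hs0 : ∀ x, 0 ≤ s x)
    (hmono : ∀ w, |w| ≤ cW → Monotone fun x => a x + s x * w)
    (haa' : ∀ x, a x ≤ a' x) (hss' : ∀ x, s x ≤ s' x) {K K' : ℝ}
    (hK : ∀ x w, |w| ≤ cW → |a x + s x * w| ≤ K * (1 + |x|))
    (hK' : ∀ x w, |w| ≤ cW → |a' x + s' x * w| ≤ K' * (1 + |x|)) :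
    IcvOrder (P.map fun ω => a (X ω) + s (X ω) * W ω)
      (P.map fun ω => a' (Y ω) + s' (Y ω) * W ω) := by
  intro φ hφc hφm hφg
  have hΦg := linGrowth1_integral_comp_add_mul (P := P) hφg hWb hK
  have hΨg := linGrowth1_integral_comp_add_mul (P := P) hφg hWb hK'
  have hΦm := stronglyMeasurable_integral_comp_add_mul (P := P) hφm.measurable hW ha hs
  have hΨm := stronglyMeasurable_integral_comp_add_mul (P := P) hφm.measurable hW ha' hs'
  calc ∫ z, φ z ∂(P.map fun ω => a (X ω) + s (X ω) * W ω)
      = ∫ x, ∫ ω, φ (a x + s x * W ω) ∂P ∂(P.map X) :=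
        integral_map_add_mul_of_indepFun hφm.measurable hφg hX hXi hW hXW hWb ha hs hK
    _ ≤ ∫ x, ∫ ω, φ (a x + s x * W ω) ∂P ∂(P.map Y) :=
        hXY _ (convexOn_integral_comp_add_mul hφc hφm hW hWb hsymm ha_conv hs_conv hs0)
          (monotone_integral_comp_add_mul hφm hW hWb hmono) hΦg
    _ ≤ ∫ x, ∫ ω, φ (a' x + s' x * W ω) ∂P ∂(P.map Y) :=
        integral_mono (hΦg.integrable_map hΦm.measurable hY hYi)
          (hΨg.integrable_map hΨm.measurable hY hYi) fun x =>
          integral_comp_add_mul_mono hφc hφm hW hWb hsymm (haa' x) (hs0 x) (hss' x)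
    _ = ∫ z, φ z ∂(P.map fun ω => a' (Y ω) + s' (Y ω) * W ω) :=
        (integral_map_add_mul_of_indepFun hφm.measurable hφg hY hYi hW hYW hWb ha' hs' hK').symm

end Comparison

section EulerStep

variable {b σ : ℝ → ℝ} {h c w : ℝ}

/-- The truncation `|w| ≤ 1 / (2 √h Lσ)` keeps the diffusion part of one step
`1/2`-Lipschitz, and the restriction on `h` does the same for the drift part. -/
lemma monotone_eulerStep {Lb Lσ : ℝ} (hh : 0 < h) (hhb : 2 * Lb * h ≤ 1) (hLσ : 0 < Lσ)
    (hbLip : ∀ x y, |b x - b y| ≤ Lb * |x - y|) (hσLip : ∀ x y, |σ x - σ y| ≤ Lσ * |x - y|)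
    (hw : |w| ≤ 1 / (2 * √h * Lσ)) :
    Monotone fun x => x + h * b x + √h * σ x * w + c := by
  intro x y hxy
  have hxy' : |x - y| = y - x := by rw [abs_sub_comm, abs_of_nonneg (sub_nonneg.2 hxy)]
  have hdrift : h * (b x - b y) ≤ (y - x) / 2 := calc
    h * (b x - b y) ≤ h * (Lb * (y - x)) :=
      mul_le_mul_of_nonneg_left ((le_abs_self _).trans (hxy' ▸ hbLip x y)) hh.le
    _ ≤ (y - x) / 2 := by nlinarith [sub_nonneg.2 hxy]
  have hw' : √h * Lσ * |w| ≤ 1 / 2 := by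
    rw [le_div_iff₀ (by positivity)] at hw
    nlinarith
  have hdiff : √h * w * (σ x - σ y) ≤ (y - x) / 2 := calc
    √h * w * (σ x - σ y) ≤ √h * |w| * (Lσ * (y - x)) := by
      refine (le_abs_self _).trans ?_
      rw [abs_mul, abs_mul, abs_of_nonneg (Real.sqrt_nonneg h), ← hxy']
      gcongr
      exact hσLip x y
    _ ≤ (y - x) / 2 := by nlinarith [sub_nonneg.2 hxy]
  dsimp only
  nlinarith

lemma abs_eulerStep_le {Cb Cσ cw : ℝ} (hh : 0 ≤ h) (hb : ∀ x, |b x| ≤ Cb * (1 + |x|))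
    (hσ : ∀ x, |σ x| ≤ Cσ * (1 + |x|)) (hw : |w| ≤ cw) (x : ℝ) :
    |x + h * b x + √h * σ x * w + c| ≤ (1 + h * Cb + √h * Cσ * cw + |c|) * (1 + |x|) := by
  have hsplit : |x + h * b x + √h * σ x * w + c| ≤ |x| + h * |b x| + √h * (|σ x| * |w|) + |c| :=
    calc |x + h * b x + √h * σ x * w + c|
        ≤ |x| + |h * b x| + |√h * σ x * w| + |c| := by
          grw [abs_add_le _ c, abs_add_three]
      _ = |x| + h * |b x| + √h * (|σ x| * |w|) + |c| := by
          rw [abs_mul, abs_mul, abs_mul, abs_of_nonneg hh, abs_of_nonneg (Real.sqrt_nonneg h),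
            mul_assoc]
  have hσw : |σ x| * |w| ≤ Cσ * (1 + |x|) * cw :=
    mul_le_mul (hσ x) hw (abs_nonneg w) ((abs_nonneg _).trans (hσ x))
  have hb' := mul_le_mul_of_nonneg_left (hb x) hh
  have hσw' := mul_le_mul_of_nonneg_left hσw (Real.sqrt_nonneg h)
  nlinarith [abs_nonneg x, abs_nonneg c, mul_nonneg (abs_nonneg c) (abs_nonneg x)]

variable {Ω : Type*} [MeasurableSpace Ω] {P : Measure Ω} [IsProbabilityMeasure P]

theorem IcvOrder.map_eulerStep {X Y W : Ω → ℝ} (hXY : IcvOrder (P.map X) (P.map Y))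
    (hX : Measurable X) (hY : Measurable Y) (hXi : Integrable X P) (hYi : Integrable Y P)
    (hW : Measurable W) (hXW : IndepFun X W P) (hYW : IndepFun Y W P)
    (hsymm : P.map (fun ω => -W ω) = P.map W) {Lb Lσ : ℝ} (hh : 0 < h) (hhb : 2 * Lb * h ≤ 1)
    (hLσ : 0 < Lσ) (hWb : ∀ ω, |W ω| ≤ 1 / (2 * √h * Lσ)) {β θ : ℝ → ℝ}
    (hbm : Measurable b) (hσm : Measurable σ) (hβm : Measurable β) (hθm : Measurable θ)
    (hbg : LinGrowth1 b) (hσg : LinGrowth1 σ) (hβg : LinGrowth1 β) (hθg : LinGrowth1 θ)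
    (hbLip : ∀ x y, |b x - b y| ≤ Lb * |x - y|) (hσLip : ∀ x y, |σ x - σ y| ≤ Lσ * |x - y|)
    (hbconv : ConvexOn ℝ univ b) (hσconv : ConvexOn ℝ univ σ) (hσ0 : ∀ x, 0 ≤ σ x)
    (hbβ : ∀ x, b x ≤ β x) (hσθ : ∀ x, σ x ≤ θ x) :
    IcvOrder (P.map fun ω => X ω + h * b (X ω) + √h * σ (X ω) * W ω + c)
      (P.map fun ω => Y ω + h * β (Y ω) + √h * θ (Y ω) * W ω + c) := by
  obtain ⟨Cb, -, hCb⟩ := hbg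
  obtain ⟨Cσ, -, hCσ⟩ := hσg
  obtain ⟨Cβ, -, hCβ⟩ := hβg
  obtain ⟨Cθ, -, hCθ⟩ := hθg
  have hstep : ∀ (f g : ℝ → ℝ) x w, x + h * f x + √h * g x * w + c =
      (x + h * f x + c) + √h * g x * w := fun _ _ _ _ => by ring
  simp only [hstep]
  refine hXY.map_add_mul (a := fun x => x + h * b x + c) (s := fun x => √h * σ x)
    (a' := fun x => x + h * β x + c) (s' := fun x => √h * θ x) hX hY hXi hYi hW hXW hYW hWb hsymm
    (by fun_prop) (by fun_prop) (by fun_prop) (by fun_prop)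
    (((convexOn_id convex_univ).add (hbconv.smul hh.le)).add_const c)
    (hσconv.smul (Real.sqrt_nonneg h)) (fun x => mul_nonneg (Real.sqrt_nonneg h) (hσ0 x))
    (fun w hw => by simpa only [hstep] using monotone_eulerStep (c := c) hh hhb hLσ hbLip hσLip hw)
    (fun x => by gcongr; exact hbβ x) (fun x => by gcongr; exact hσθ x)
    (fun x w hw => by simpa only [hstep] using abs_eulerStep_le (c := c) hh.le hCb hCσ hw x)
    (fun x w hw => by simpa only [hstep] using abs_eulerStep_le (c := c) hh.le hCβ hCθ hw x)

end EulerStep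

section Truncation

def truncate (c z : ℝ) : ℝ := if |z| ≤ c then z else 0

lemma measurable_truncate (c : ℝ) : Measurable (truncate c) :=
  Measurable.ite (measurableSet_le (by fun_prop) measurable_const) measurable_id measurable_const

lemma abs_truncate_le {c : ℝ} (hc : 0 ≤ c) (z : ℝ) : |truncate c z| ≤ c := by
  unfold truncate
  split_ifs with hz
  · exact hz
  · simpa using hc

lemma truncate_neg (c z : ℝ) : truncate c (-z) = -truncate c z := by
  unfold truncate
  split_ifs <;> simp_all

lemma map_neg_truncate_eq {Ω : Type*} [MeasurableSpace Ω] {P : Measure Ω} {Z : Ω → ℝ}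
    (hZ : Measurable Z) (hsymm : P.map (fun ω => -Z ω) = P.map Z) (c : ℝ) :
    P.map (fun ω => -truncate c (Z ω)) = P.map (fun ω => truncate c (Z ω)) := by
  calc P.map (fun ω => -truncate c (Z ω)) = (P.map fun ω => -Z ω).map (truncate c) := by
        rw [Measure.map_map (f := fun ω => -Z ω) (measurable_truncate c) hZ.neg]
        simp only [Function.comp_def, truncate_neg]
    _ = P.map fun ω => truncate c (Z ω) := by
        rw [hsymm, Measure.map_map (measurable_truncate c) hZ]
        rfl

lemma map_neg_eq_of_map_eq_gaussianReal {Ω : Type*} [MeasurableSpace Ω] {P : Measure Ω}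
    {Z : Ω → ℝ} (hZ : Measurable Z) {v : NNReal} (hZlaw : P.map Z = gaussianReal 0 v) :
    P.map (fun ω => -Z ω) = P.map Z :=
  calc P.map (fun ω => -Z ω) = (P.map Z).map (fun x => -x) :=
        (Measure.map_map measurable_neg hZ).symm
    _ = P.map Z := by rw [hZlaw, gaussianReal_map_neg, neg_zero]

end Truncation

section PastSigmaAlgebra

lemma ProbabilityTheory.iIndep.indepFun_of_measurable_biSup {Ω ι β γ : Type*}
    [MeasurableSpace Ω] [MeasurableSpace β] [MeasurableSpace γ] {P : Measure Ω}
    {m : ι → MeasurableSpace Ω} (h_le : ∀ i, m i ≤ ‹MeasurableSpace Ω›) (h_indep : iIndep m P)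
    {S : Set ι} {j : ι} (hj : j ∉ S) {f : Ω → β} {g : Ω → γ}
    (hf : Measurable[⨆ i ∈ S, m i] f) (hg : Measurable[m j] g) : IndepFun f g P := by
  rw [IndepFun_iff_Indep]
  exact indep_of_indep_of_le_right
    (indep_of_indep_of_le_left (indep_iSup_of_disjoint h_le h_indep
      (Set.disjoint_singleton_right.2 hj)) hf.comap_le)
    (hg.comap_le.trans (le_iSup₂ (f := fun i (_ : i ∈ ({j} : Set ι)) => m i) j rfl))

variable {Ω : Type*} {M : ℕ} {X₀ Y₀ : Ω → ℝ} {Z : Fin M → Ω → ℝ}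

/-- The σ-algebra generated by `(X₀, Y₀)` and the noises `Z j`, `j < k`. -/
abbrev pastSigma (X₀ Y₀ : Ω → ℝ) (Z : Fin M → Ω → ℝ) (k : ℕ) : MeasurableSpace Ω :=
  ⨆ i ∈ {i | Sum.elim (fun j : Fin M => (j : ℕ) < k) (fun _ => True) i},
    MeasurableSpace.comap (mixFunR X₀ Y₀ Z i) (mixMSR M i)

lemma comap_mixFunR_le [MeasurableSpace Ω] (hX₀ : Measurable X₀) (hY₀ : Measurable Y₀)
    (hZ : ∀ m, Measurable (Z m)) (i : Fin M ⊕ Unit) :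
    MeasurableSpace.comap (mixFunR X₀ Y₀ Z i) (mixMSR M i) ≤ ‹_› := by
  cases i with
  | inl j => exact (hZ j).comap_le
  | inr _ => exact (hX₀.prodMk hY₀).comap_le

lemma pastSigma_le [MeasurableSpace Ω] (hX₀ : Measurable X₀) (hY₀ : Measurable Y₀)
    (hZ : ∀ m, Measurable (Z m)) (k : ℕ) : pastSigma X₀ Y₀ Z k ≤ ‹_› :=
  iSup₂_le fun i _ => comap_mixFunR_le hX₀ hY₀ hZ i

lemma pastSigma_mono {k k' : ℕ} (hkk' : k ≤ k') : pastSigma X₀ Y₀ Z k ≤ pastSigma X₀ Y₀ Z k' := by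
  refine iSup₂_le fun i hi => le_iSup₂ (f := fun i _ =>
    MeasurableSpace.comap (mixFunR X₀ Y₀ Z i) (mixMSR M i)) i ?_
  cases i with
  | inl j => exact lt_of_lt_of_le hi hkk'
  | inr _ => trivial

lemma measurable_pastSigma_initial (k : ℕ) :
    Measurable[pastSigma X₀ Y₀ Z k] fun ω => (X₀ ω, Y₀ ω) :=
  Measurable.of_comap_le <| le_iSup₂ (f := fun i _ =>
    MeasurableSpace.comap (mixFunR X₀ Y₀ Z i) (mixMSR M i)) (Sum.inr ()) trivial

lemma measurable_pastSigma_noise {j : Fin M} {k : ℕ} (hjk : (j : ℕ) < k) :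
    Measurable[pastSigma X₀ Y₀ Z k] (Z j) :=
  Measurable.of_comap_le <| le_iSup₂ (f := fun i _ =>
    MeasurableSpace.comap (mixFunR X₀ Y₀ Z i) (mixMSR M i)) (Sum.inl j) hjk

lemma indepFun_noise_of_measurable_pastSigma [MeasurableSpace Ω] {P : Measure Ω}
    (hX₀ : Measurable X₀) (hY₀ : Measurable Y₀) (hZ : ∀ m, Measurable (Z m))
    (hindep : @iIndepFun _ _ _ _ (mixMSR M) (mixFunR X₀ Y₀ Z) P) (m : Fin M) {f : Ω → ℝ}
    (hf : Measurable[pastSigma X₀ Y₀ Z m] f) : IndepFun f (Z m) P :=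
  hindep.iIndep.indepFun_of_measurable_biSup (comap_mixFunR_le hX₀ hY₀ hZ) (j := Sum.inl m)
    (lt_irrefl (m : ℕ)) hf (Measurable.of_comap_le le_rfl)

end PastSigmaAlgebra

section Scheme

variable {Ω : Type*} [MeasurableSpace Ω] {P : Measure Ω} [IsProbabilityMeasure P] {p : ℝ}

lemma memPp1_map_of_memLp (hp : 0 < p) {X : Ω → ℝ} (hX : Measurable X)
    (hXp : MemLp X (.ofReal p) P) : MemPp1 p (P.map X) := by
  refine ⟨Measure.isProbabilityMeasure_map hX.aemeasurable, ?_⟩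
  rw [lintegral_map (by fun_prop) hX]
  have hmom := lintegral_rpow_enorm_lt_top_of_eLpNorm_lt_top
    (ENNReal.ofReal_pos.2 hp).ne' ENNReal.ofReal_ne_top hXp.2
  rw [ENNReal.toReal_ofReal hp.le] at hmom
  refine lt_of_eq_of_lt (lintegral_congr fun ω => ?_) hmom
  rw [← ENNReal.ofReal_rpow_of_nonneg (abs_nonneg _) hp.le, ← Real.norm_eq_abs, ofReal_norm]

lemma linGrowth1_of_growth_bound {b β σ θ : ℝ → Measure ℝ → ℝ} {σ0 : Measure ℝ → ℝ} {L : ℝ}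
    (hL : 0 ≤ L) (hgrowth : ∀ x μ, MemPp1 p μ →
      |b x μ| + |β x μ| + |σ x μ| + |θ x μ| + |σ0 μ| ≤ L * (1 + |x| + (∫ ξ, |ξ| ^ p ∂μ) ^ (1 / p)))
    {μ : Measure ℝ} (hμ : MemPp1 p μ) :
    LinGrowth1 (b · μ) ∧ LinGrowth1 (β · μ) ∧ LinGrowth1 (σ · μ) ∧ LinGrowth1 (θ · μ) := by
  have hR : 0 ≤ (∫ ξ, |ξ| ^ p ∂μ) ^ (1 / p) := by positivity
  refine ⟨.of_abs_le hL hR fun x => ?_, .of_abs_le hL hR fun x => ?_,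
    .of_abs_le hL hR fun x => ?_, .of_abs_le hL hR fun x => ?_⟩ <;>
  linarith [hgrowth x μ hμ, abs_nonneg (b x μ), abs_nonneg (β x μ), abs_nonneg (σ x μ),
    abs_nonneg (θ x μ), abs_nonneg (σ0 μ)]

variable {M : ℕ} {X₀ Y₀ : Ω → ℝ} {Z : Fin M → Ω → ℝ}

theorem eulerScheme_measurable_memLp (hp : 0 < p) (hX₀ : Measurable X₀) (hY₀ : Measurable Y₀)
    (hZ : ∀ m, Measurable (Z m)) {b σ : Fin M → ℝ → Measure ℝ → ℝ} {c : Fin M → Measure ℝ → ℝ}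
    {h cT : ℝ} (hh : 0 ≤ h) (hcT : 0 ≤ cT)
    (hmeas : ∀ m μ, MemPp1 p μ → Measurable (b m · μ) ∧ Measurable (σ m · μ))
    (hgrowth : ∀ m μ, MemPp1 p μ → LinGrowth1 (b m · μ) ∧ LinGrowth1 (σ m · μ))
    {X : Fin (M + 1) → Ω → ℝ} (hX0 : Measurable[pastSigma X₀ Y₀ Z 0] (X 0))
    (hX0p : MemLp (X 0) (.ofReal p) P)
    (hrec : ∀ m : Fin M, ∀ ω, X m.succ ω =
      X m.castSucc ω + h * b m (X m.castSucc ω) (P.map (X m.castSucc)) +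
        √h * σ m (X m.castSucc ω) (P.map (X m.castSucc)) * truncate cT (Z m ω) +
        c m (P.map (X m.castSucc))) (k : Fin (M + 1)) :
    Measurable[pastSigma X₀ Y₀ Z k] (X k) ∧ MemLp (X k) (.ofReal p) P := by
  induction k using Fin.induction with
  | zero => exact ⟨hX0, hX0p⟩
  | succ m ih =>
    obtain ⟨hXpast, hXp⟩ := ih
    have hμ := memPp1_map_of_memLp hp (hXpast.mono (pastSigma_le hX₀ hY₀ hZ _) le_rfl) hXp
    obtain ⟨hbm, hσm⟩ := hmeas m _ hμ
    obtain ⟨⟨Cb, -, hCb⟩, ⟨Cσ, -, hCσ⟩⟩ := hgrowth m _ hμ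
    have hXpast' : Measurable[pastSigma X₀ Y₀ Z (m + 1)] (X m.castSucc) :=
      hXpast.mono (pastSigma_mono (by simp)) le_rfl
    have hWpast : Measurable[pastSigma X₀ Y₀ Z (m + 1)] fun ω => truncate cT (Z m ω) :=
      (measurable_truncate cT).comp (measurable_pastSigma_noise (Nat.lt_succ_self m))
    have hnext : Measurable[pastSigma X₀ Y₀ Z (m.succ : ℕ)] (X m.succ) := by
      rw [funext (hrec m), Fin.val_succ]
      exact ((hXpast'.add ((hbm.comp hXpast').const_mul h)).add
        (((hσm.comp hXpast').const_mul √h).mul hWpast)).add measurable_const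
    have hbound : ∀ ω, |X m.succ ω| ≤
        (1 + h * Cb + √h * Cσ * cT + |c m (P.map (X m.castSucc))|) * (1 + |X m.castSucc ω|) :=
      fun ω => by
      rw [hrec]
      exact abs_eulerStep_le hh hCb hCσ (abs_truncate_le hcT _) _
    exact ⟨hnext, MemLp.of_abs_le_mul_one_add_abs hXp
      (hnext.mono (pastSigma_le hX₀ hY₀ hZ _) le_rfl).aestronglyMeasurable hbound⟩

end Scheme

theorem truncated_euler_marginal_increasing_convex_order_general
    {Ω : Type*} [MeasurableSpace Ω] (P : Measure Ω) [IsProbabilityMeasure P]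
    {M : ℕ}
    (p : ℝ) (hp : 2 ≤ p) (h : ℝ)
    -- initial conditions
    (X₀ Y₀ : Ω → ℝ) (hX₀meas : Measurable X₀) (hY₀meas : Measurable Y₀)
    (hX₀p : MemLp X₀ (ENNReal.ofReal p) P) (hY₀p : MemLp Y₀ (ENNReal.ofReal p) P)
    -- i.i.d. standard normal noises, independent of (X₀, Y₀)
    (Z : Fin M → Ω → ℝ) (hZmeas : ∀ m, Measurable (Z m))
    (hZlaw : ∀ m, Measure.map (Z m) P = gaussianReal 0 1)
    (hindep : @iIndepFun _ _ _ _ (mixMSR M) (mixFunR X₀ Y₀ Z) P)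
    -- fixed realization of the rescaled common-noise increments
    (z0 : Fin M → ℝ)
    -- coefficients
    (b β σ θ : Fin M → ℝ → Measure ℝ → ℝ) (σ0 : Fin M → Measure ℝ → ℝ)
    -- (a) measurability in x and the growth bound
    (hmeas : ∀ m μ, MemPp1 p μ → Measurable (fun x => b m x μ) ∧
      Measurable (fun x => β m x μ) ∧ Measurable (fun x => σ m x μ) ∧
      Measurable (fun x => θ m x μ))
    (L : ℝ) (hL : 0 ≤ L)
    (hgrowth : ∀ m x μ, MemPp1 p μ →
      |b m x μ| + |β m x μ| + |σ m x μ| + |θ m x μ| + |σ0 m μ| ≤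
        L * (1 + |x| + (∫ ξ, |ξ| ^ p ∂μ) ^ (1 / p)))
    -- (b) uniform Lipschitz continuity of b and σ in x
    (Lb Lσ : ℝ) (hLσ : 0 < Lσ)
    (hbLip : ∀ m μ, MemPp1 p μ → ∀ x y, |b m x μ - b m y μ| ≤ Lb * |x - y|)
    (hσLip : ∀ m μ, MemPp1 p μ → ∀ x y, |σ m x μ - σ m y μ| ≤ Lσ * |x - y|)
    -- (c) convexity of b and σ in x
    (hbconv : ∀ m μ, MemPp1 p μ → ConvexOn ℝ Set.univ (fun x => b m x μ))
    (hσconv : ∀ m μ, MemPp1 p μ → ConvexOn ℝ Set.univ (fun x => σ m x μ))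
    -- (d) b and σ are non-decreasing in μ w.r.t. the increasing convex order
    (hbmono : ∀ m x μ ν, MemPp1 p μ → MemPp1 p ν → IcvOrder μ ν → b m x μ ≤ b m x ν)
    (hσmono : ∀ m x μ ν, MemPp1 p μ → MemPp1 p ν → IcvOrder μ ν → σ m x μ ≤ σ m x ν)
    -- (e) σ⁰ is constant in μ w.r.t. the increasing convex order
    (hσ0const : ∀ m μ ν, MemPp1 p μ → MemPp1 p ν → IcvOrder μ ν → σ0 m μ = σ0 m ν)
    -- (f) b ≤ β and 0 ≤ σ ≤ θ
    (hbβ : ∀ m x μ, MemPp1 p μ → b m x μ ≤ β m x μ)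
    (hσθ : ∀ m x μ, MemPp1 p μ → 0 ≤ σ m x μ ∧ σ m x μ ≤ θ m x μ)
    -- (g) h ∈ (0, min(1, 1/(2 L_b))) (the bound being 1 when L_b = 0)
    (hh0 : 0 < h) (hhb : 2 * Lb * h < 1)
    -- the truncated Euler schemes, with truncation threshold c_{h,σ} = 1/(2 √h L_σ)
    (Xt Yt : Fin (M + 1) → Ω → ℝ)
    (hX0 : Xt 0 = X₀) (hY0 : Yt 0 = Y₀)
    (hXrec : ∀ m : Fin M, ∀ ω, Xt m.succ ω =
      Xt m.castSucc ω + h * b m (Xt m.castSucc ω) (Measure.map (Xt m.castSucc) P) +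
        Real.sqrt h * σ m (Xt m.castSucc ω) (Measure.map (Xt m.castSucc) P) *
          (if |Z m ω| ≤ 1 / (2 * Real.sqrt h * Lσ) then Z m ω else 0) +
        Real.sqrt h * σ0 m (Measure.map (Xt m.castSucc) P) * z0 m)
    (hYrec : ∀ m : Fin M, ∀ ω, Yt m.succ ω =
      Yt m.castSucc ω + h * β m (Yt m.castSucc ω) (Measure.map (Yt m.castSucc) P) +
        Real.sqrt h * θ m (Yt m.castSucc ω) (Measure.map (Yt m.castSucc) P) *
          (if |Z m ω| ≤ 1 / (2 * Real.sqrt h * Lσ) then Z m ω else 0) +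
        Real.sqrt h * σ0 m (Measure.map (Yt m.castSucc) P) * z0 m)
    -- increasing convex order of the initial conditions
    (hinit : IcvOrder (Measure.map X₀ P) (Measure.map Y₀ P)) :
    ∀ m : Fin (M + 1), IcvOrder (Measure.map (Xt m) P) (Measure.map (Yt m) P) := by
  have hp0 : 0 < p := by linarith
  have hp1 : 1 ≤ ENNReal.ofReal p := ENNReal.one_le_ofReal.2 (by linarith)
  have hcT : 0 ≤ 1 / (2 * √h * Lσ) := by positivity
  have hlin := fun m μ (hμ : MemPp1 p μ) => linGrowth1_of_growth_bound hL (hgrowth m) hμ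
  have hXad := eulerScheme_measurable_memLp hp0 hX₀meas hY₀meas hZmeas hh0.le hcT
    (fun m μ hμ => ⟨(hmeas m μ hμ).1, (hmeas m μ hμ).2.2.1⟩)
    (fun m μ hμ => ⟨(hlin m μ hμ).1, (hlin m μ hμ).2.2.1⟩)
    (hX0 ▸ measurable_fst.comp (measurable_pastSigma_initial 0)) (hX0 ▸ hX₀p)
    (c := fun m μ => √h * σ0 m μ * z0 m) hXrec
  have hYad := eulerScheme_measurable_memLp hp0 hX₀meas hY₀meas hZmeas hh0.le hcT
    (fun m μ hμ => ⟨(hmeas m μ hμ).2.1, (hmeas m μ hμ).2.2.2⟩)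
    (fun m μ hμ => ⟨(hlin m μ hμ).2.1, (hlin m μ hμ).2.2.2⟩)
    (hY0 ▸ measurable_snd.comp (measurable_pastSigma_initial 0)) (hY0 ▸ hY₀p)
    (c := fun m μ => √h * σ0 m μ * z0 m) hYrec
  intro k
  induction k using Fin.induction with
  | zero => rwa [hX0, hY0]
  | succ m ih =>
    obtain ⟨hXpast, hXp⟩ := hXad m.castSucc
    obtain ⟨hYpast, hYp⟩ := hYad m.castSucc
    have hXm := hXpast.mono (pastSigma_le hX₀meas hY₀meas hZmeas _) le_rfl
    have hYm := hYpast.mono (pastSigma_le hX₀meas hY₀meas hZmeas _) le_rfl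
    have hμ := memPp1_map_of_memLp hp0 hXm hXp
    have hν := memPp1_map_of_memLp hp0 hYm hYp
    rw [funext (hXrec m), funext (hYrec m), ← hσ0const m _ _ hμ hν ih]
    exact ih.map_eulerStep hXm hYm (hXp.integrable hp1) (hYp.integrable hp1)
      ((measurable_truncate _).comp (hZmeas m))
      ((indepFun_noise_of_measurable_pastSigma hX₀meas hY₀meas hZmeas hindep m hXpast).comp
        measurable_id (measurable_truncate _))
      ((indepFun_noise_of_measurable_pastSigma hX₀meas hY₀meas hZmeas hindep m hYpast).comp
        measurable_id (measurable_truncate _))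
      (map_neg_truncate_eq (hZmeas m) (map_neg_eq_of_map_eq_gaussianReal (hZmeas m) (hZlaw m)) _)
      hh0 hhb.le hLσ (fun ω => abs_truncate_le hcT _)
      (hmeas m _ hμ).1 (hmeas m _ hμ).2.2.1 (hmeas m _ hν).2.1 (hmeas m _ hν).2.2.2
      (hlin m _ hμ).1 (hlin m _ hμ).2.2.1 (hlin m _ hν).2.1 (hlin m _ hν).2.2.2
      (hbLip m _ hμ) (hσLip m _ hμ) (hbconv m _ hμ) (hσconv m _ hμ) (fun x => (hσθ m x _ hμ).1)
      (fun x => (hbmono m x _ _ hμ hν ih).trans (hbβ m x _ hν))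
      (fun x => (hσmono m x _ _ hμ hν ih).trans (hσθ m x _ hν).2)

/-- Marginal increasing convex order of the truncated Euler schemes of two one-dimensional
McKean–Vlasov equations with common noise, along a fixed realization `z⁰` of the (rescaled)
common-noise increments: under assumptions (a)–(g), if `Law(X₀) ⪯_icv Law(Y₀)` then
`Law(X̃_m) ⪯_icv Law(Ỹ_m)` for every `m = 0, …, M`. -/
theorem truncated_euler_marginal_increasing_convex_order
    {Ω : Type*} [MeasurableSpace Ω] (P : Measure Ω) [IsProbabilityMeasure P]
    {M : ℕ} (hM : 1 ≤ M)
    (p : ℝ) (hp : 2 ≤ p) (T : ℝ) (hT : 0 < T) (h : ℝ) (hhdef : h = T / M)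
    -- initial conditions
    (X₀ Y₀ : Ω → ℝ) (hX₀meas : Measurable X₀) (hY₀meas : Measurable Y₀)
    (hX₀p : MemLp X₀ (ENNReal.ofReal p) P) (hY₀p : MemLp Y₀ (ENNReal.ofReal p) P)
    -- i.i.d. standard normal noises, independent of (X₀, Y₀)
    (Z : Fin M → Ω → ℝ) (hZmeas : ∀ m, Measurable (Z m))
    (hZlaw : ∀ m, Measure.map (Z m) P = gaussianReal 0 1)
    (hindep : @iIndepFun _ _ _ _ (mixMSR M) (mixFunR X₀ Y₀ Z) P)
    -- fixed realization of the rescaled common-noise increments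
    (z0 : Fin M → ℝ)
    -- coefficients
    (b β σ θ : Fin M → ℝ → Measure ℝ → ℝ) (σ0 : Fin M → Measure ℝ → ℝ)
    -- (a) measurability in x and the growth bound
    (hmeas : ∀ m μ, MemPp1 p μ → Measurable (fun x => b m x μ) ∧
      Measurable (fun x => β m x μ) ∧ Measurable (fun x => σ m x μ) ∧
      Measurable (fun x => θ m x μ))
    (L : ℝ) (hL : 0 ≤ L)
    (hgrowth : ∀ m x μ, MemPp1 p μ →
      |b m x μ| + |β m x μ| + |σ m x μ| + |θ m x μ| + |σ0 m μ| ≤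
        L * (1 + |x| + (∫ ξ, |ξ| ^ p ∂μ) ^ (1 / p)))
    -- (b) uniform Lipschitz continuity of b and σ in x
    (Lb Lσ : ℝ) (hLb : 0 ≤ Lb) (hLσ : 0 < Lσ)
    (hbLip : ∀ m μ, MemPp1 p μ → ∀ x y, |b m x μ - b m y μ| ≤ Lb * |x - y|)
    (hσLip : ∀ m μ, MemPp1 p μ → ∀ x y, |σ m x μ - σ m y μ| ≤ Lσ * |x - y|)
    -- (c) convexity of b and σ in x
    (hbconv : ∀ m μ, MemPp1 p μ → ConvexOn ℝ Set.univ (fun x => b m x μ))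
    (hσconv : ∀ m μ, MemPp1 p μ → ConvexOn ℝ Set.univ (fun x => σ m x μ))
    -- (d) b and σ are non-decreasing in μ w.r.t. the increasing convex order
    (hbmono : ∀ m x μ ν, MemPp1 p μ → MemPp1 p ν → IcvOrder μ ν → b m x μ ≤ b m x ν)
    (hσmono : ∀ m x μ ν, MemPp1 p μ → MemPp1 p ν → IcvOrder μ ν → σ m x μ ≤ σ m x ν)
    -- (e) σ⁰ is constant in μ w.r.t. the increasing convex order
    (hσ0const : ∀ m μ ν, MemPp1 p μ → MemPp1 p ν → IcvOrder μ ν → σ0 m μ = σ0 m ν)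
    -- (f) b ≤ β and 0 ≤ σ ≤ θ
    (hbβ : ∀ m x μ, MemPp1 p μ → b m x μ ≤ β m x μ)
    (hσθ : ∀ m x μ, MemPp1 p μ → 0 ≤ σ m x μ ∧ σ m x μ ≤ θ m x μ)
    -- (g) h ∈ (0, min(1, 1/(2 L_b))) (the bound being 1 when L_b = 0)
    (hh0 : 0 < h) (hh1 : h < 1) (hhb : 2 * Lb * h < 1)
    -- the truncated Euler schemes, with truncation threshold c_{h,σ} = 1/(2 √h L_σ)
    (Xt Yt : Fin (M + 1) → Ω → ℝ)
    (hX0 : Xt 0 = X₀) (hY0 : Yt 0 = Y₀)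
    (hXrec : ∀ m : Fin M, ∀ ω, Xt m.succ ω =
      Xt m.castSucc ω + h * b m (Xt m.castSucc ω) (Measure.map (Xt m.castSucc) P) +
        Real.sqrt h * σ m (Xt m.castSucc ω) (Measure.map (Xt m.castSucc) P) *
          (if |Z m ω| ≤ 1 / (2 * Real.sqrt h * Lσ) then Z m ω else 0) +
        Real.sqrt h * σ0 m (Measure.map (Xt m.castSucc) P) * z0 m)
    (hYrec : ∀ m : Fin M, ∀ ω, Yt m.succ ω =
      Yt m.castSucc ω + h * β m (Yt m.castSucc ω) (Measure.map (Yt m.castSucc) P) +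
        Real.sqrt h * θ m (Yt m.castSucc ω) (Measure.map (Yt m.castSucc) P) *
          (if |Z m ω| ≤ 1 / (2 * Real.sqrt h * Lσ) then Z m ω else 0) +
        Real.sqrt h * σ0 m (Measure.map (Yt m.castSucc) P) * z0 m)
    -- increasing convex order of the initial conditions
    (hinit : IcvOrder (Measure.map X₀ P) (Measure.map Y₀ P)) :
    ∀ m : Fin (M + 1), IcvOrder (Measure.map (Xt m) P) (Measure.map (Yt m) P) :=
  truncated_euler_marginal_increasing_convex_order_general P p hp h X₀ Y₀ hX₀meas hY₀meas hX₀p hY₀p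
    Z hZmeas hZlaw hindep z0 b β σ θ σ0 hmeas L hL hgrowth Lb Lσ hLσ hbLip hσLip hbconv hσconv
    hbmono hσmono hσ0const hbβ hσθ hh0 hhb Xt Yt hX0 hY0 hXrec hYrec hinit

end
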